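/- arXiv:1802.08917 — 2 statements merged into one kernel-verified Lean document; each statement's English description precedes it below -/
import Mathlib

section
/- Let h : ℝⁿ → ℝ be continuously differentiable, let C = {x | h(x) ≥ 0}, and suppose there is a constant γ > 0 such that ∇h(x) · f(x) ≥ -γ·h(x) for all x. Then along any solution x(t) of ẋ = f(x) with h(x(0)) ≥ 0, one has h(x(t)) ≥ 0 for all t ≥ 0. -/
/-!
Along a solution, `g t = h (x t)` satisfies `g' ≥ -γ g`, so `t ↦ exp (γ t) g t` has nonnegative
derivative and is therefore nondecreasing; since it is nonnegative at `0` and `exp` is positive,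
`g` stays nonnegative. This is the comparison with the linear ODE `ẏ = -γ y`.
-/

open Set Real

theorem monotoneOn_exp_mul_of_hasDerivAt_ge_neg_mul {g g' : ℝ → ℝ} {γ a : ℝ}
    (hg : ∀ t ∈ Ici a, HasDerivAt g (g' t) t) (hbound : ∀ t ∈ Ici a, -γ * g t ≤ g' t) :
    MonotoneOn (fun t => exp (γ * t) * g t) (Ici a) := by
  have hderiv : ∀ t ∈ Ici a,
      HasDerivAt (fun t => exp (γ * t) * g t) (exp (γ * t) * (γ * g t + g' t)) t := by
    intro t ht
    have hexp : HasDerivAt (fun t => exp (γ * t)) (exp (γ * t) * γ) t := by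
      simpa using ((hasDerivAt_id t).const_mul γ).exp
    exact (hexp.mul (hg t ht)).congr_deriv (by ring)
  refine monotoneOn_of_hasDerivWithinAt_nonneg (convex_Ici a)
    (fun t ht => (hderiv t ht).continuousAt.continuousWithinAt)
    (fun t ht => (hderiv t (interior_subset ht)).hasDerivWithinAt) fun t ht => ?_
  have := hbound t (interior_subset ht)
  exact mul_nonneg (exp_pos _).le (by linarith)

theorem nonneg_of_hasDerivAt_ge_neg_mul {g g' : ℝ → ℝ} {γ a : ℝ}
    (hg : ∀ t ∈ Ici a, HasDerivAt g (g' t) t) (hbound : ∀ t ∈ Ici a, -γ * g t ≤ g' t)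
    (ha : 0 ≤ g a) : ∀ t ∈ Ici a, 0 ≤ g t := by
  intro t ht
  have hmono := monotoneOn_exp_mul_of_hasDerivAt_ge_neg_mul hg hbound self_mem_Ici ht ht
  have : 0 ≤ exp (γ * t) * g t := (mul_nonneg (exp_pos _).le ha).trans hmono
  exact nonneg_of_mul_nonneg_right this (exp_pos _)

theorem barrier_certificate_linear_kappa_general
    (n : ℕ) (f : EuclideanSpace ℝ (Fin n) → EuclideanSpace ℝ (Fin n))
    (h : EuclideanSpace ℝ (Fin n) → ℝ) (hh : ContDiff ℝ 1 h)
    (γ : ℝ)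
    (hbar : ∀ x, fderiv ℝ h x (f x) ≥ -γ * h x)
    (x : ℝ → EuclideanSpace ℝ (Fin n))
    (hsol : ∀ t ∈ Set.Ici (0 : ℝ), HasDerivAt x (f (x t)) t)
    (h0 : h (x 0) ≥ 0) :
    ∀ t ∈ Set.Ici (0 : ℝ), h (x t) ≥ 0 :=
  nonneg_of_hasDerivAt_ge_neg_mul
    (fun t ht => (hh.differentiable one_ne_zero (x t)).hasFDerivAt.comp_hasDerivAt t (hsol t ht))
    (fun t _ => hbar (x t)) h0

/-- Barrier certificate with linear class-κ function: if `∇h(x)·f(x) ≥ -γ h(x)` everywhere,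
then along any solution of `ẋ = f(x)` starting with `h(x 0) ≥ 0`, `h` stays nonnegative. -/
theorem barrier_certificate_linear_kappa
    (n : ℕ) (f : EuclideanSpace ℝ (Fin n) → EuclideanSpace ℝ (Fin n))
    (hf : ∀ x, ∃ K, ∃ s ∈ nhds x, LipschitzOnWith K f s)
    (h : EuclideanSpace ℝ (Fin n) → ℝ) (hh : ContDiff ℝ 1 h)
    (γ : ℝ) (hγ : 0 < γ)
    (hbar : ∀ x, fderiv ℝ h x (f x) ≥ -γ * h x)
    (x : ℝ → EuclideanSpace ℝ (Fin n))
    (hsol : ∀ t ∈ Set.Ici (0 : ℝ), HasDerivAt x (f (x t)) t)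
    (h0 : h (x 0) ≥ 0) :
    ∀ t ∈ Set.Ici (0 : ℝ), h (x t) ≥ 0 :=
  barrier_certificate_linear_kappa_general n f h hh γ hbar x hsol h0
end

section
/- Let V : ℝⁿ → ℝ be a Lyapunov function and c* > 0 satisfy: -∇V(x)·f(x) > 0 for all x in V(c*) := {x | V(x) ≤ c*} with x ≠ 0. Define h̄(x) = c* - V(x) and C̄ = {x | h̄(x) ≥ 0}. Then for any extended class-κ function κ, h̄ satisfies the barrier condition ∇h̄(x)·f(x) ≥ -κ(h̄(x)) for all x ∈ C̄, and C̄ = V(c*). Consequently h̄ is a feasible solution to the barrier-certificate optimization and the optimal barrier-certified region C* satisfies μ(V(c*)) ≤ μ(C*). -/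
/-!
Along `f`, the derivative of `h̄ = c - V` is `-∇V·f`, which is positive on `{V ≤ c} \ {0}` by
hypothesis and zero at the equilibrium `0`. A class-κ term `-κ(h̄)` is nonpositive wherever
`h̄ ≥ 0`, so the barrier inequality holds on `{h̄ ≥ 0} = {V ≤ c}`; hence `h̄` is feasible and
optimality of `C*` bounds the measure of the sublevel set.
-/

lemma Monotone.nonneg_of_map_zero {α β : Type*} [Preorder α] [Zero α] [Preorder β] [Zero β]
    {κ : α → β} (hκ : Monotone κ) (hκ0 : κ 0 = 0) {r : α} (hr : 0 ≤ r) : 0 ≤ κ r :=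
  hκ0 ▸ hκ hr

section Barrier

variable {E : Type*} [NormedAddCommGroup E] [NormedSpace ℝ E]

lemma barrier_condition_of_fderiv_nonneg {h : E → ℝ} {f : E → E}
    (hflow : ∀ x, 0 ≤ h x → 0 ≤ fderiv ℝ h x (f x))
    {κ : ℝ → ℝ} (hκ : Monotone κ) (hκ0 : κ 0 = 0) :
    ∀ x, h x ≥ 0 → fderiv ℝ h x (f x) ≥ -κ (h x) := fun x hx =>
  calc -κ (h x) ≤ 0 := neg_nonpos.mpr (hκ.nonneg_of_map_zero hκ0 hx)
    _ ≤ fderiv ℝ h x (f x) := hflow x hx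

lemma fderiv_const_sub_nonneg_of_decrease {V : E → ℝ} {f : E → E} {c : ℝ} (hf0 : f 0 = 0)
    (hdec : ∀ x, V x ≤ c → x ≠ 0 → -fderiv ℝ V x (f x) > 0) :
    ∀ x, 0 ≤ c - V x → 0 ≤ fderiv ℝ (fun y => c - V y) x (f x) := by
  intro x hx
  rw [fderiv_const_sub, neg_apply]
  rcases eq_or_ne x 0 with rfl | hx0
  · simp [hf0]
  · exact (hdec x (sub_nonneg.mp hx) hx0).le

end Barrier

theorem lyapunov_sublevel_feasible_barrier_general
    (n : ℕ) (f : EuclideanSpace ℝ (Fin n) → EuclideanSpace ℝ (Fin n))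
    (hf0 : f 0 = 0)
    (V : EuclideanSpace ℝ (Fin n) → ℝ) (hV : ContDiff ℝ 1 V)
    (κ : ℝ → ℝ) (hκ : StrictMono κ) (hκ0 : κ 0 = 0)
    (c : ℝ)
    (hdec : ∀ x, V x ≤ c → x ≠ 0 → -fderiv ℝ V x (f x) > 0)
    -- `hstar` is an optimal barrier certificate: its region `C*` has measure at least that
    -- of the region of every feasible barrier certificate `h'`.
    (hstar : EuclideanSpace ℝ (Fin n) → ℝ)
    (hopt : ∀ h' : EuclideanSpace ℝ (Fin n) → ℝ, Differentiable ℝ h' →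
      (∀ x, h' x ≥ 0 → x ≠ 0 → -fderiv ℝ V x (f x) > 0) →
      (∀ x, h' x ≥ 0 → fderiv ℝ h' x (f x) ≥ -κ (h' x)) →
      MeasureTheory.volume {x | h' x ≥ 0} ≤ MeasureTheory.volume {x | hstar x ≥ 0}) :
    (∀ x, c - V x ≥ 0 → fderiv ℝ (fun y => c - V y) x (f x) ≥ -κ (c - V x)) ∧
    {x | c - V x ≥ 0} = {x | V x ≤ c} ∧
    MeasureTheory.volume {x | V x ≤ c} ≤ MeasureTheory.volume {x | hstar x ≥ 0} := by
  have hbarrier : ∀ x, c - V x ≥ 0 → fderiv ℝ (fun y => c - V y) x (f x) ≥ -κ (c - V x) :=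
    barrier_condition_of_fderiv_nonneg (fderiv_const_sub_nonneg_of_decrease hf0 hdec)
      hκ.monotone hκ0
  have hset : {x | c - V x ≥ 0} = {x | V x ≤ c} :=
    Set.ext fun x => show c - V x ≥ 0 ↔ V x ≤ c from sub_nonneg
  refine ⟨hbarrier, hset, hset ▸ hopt _ ?_ ?_ hbarrier⟩
  · exact (differentiable_const c).sub (hV.differentiable one_ne_zero)
  · exact fun x hx => hdec x (sub_nonneg.mp hx)

/-- The Lyapunov sublevel set yields a feasible barrier certificate `h̄ = c* - V`, and hence
the optimal barrier-certified region is at least as large (in Lebesgue measure) as the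
Lyapunov sublevel estimate. -/
theorem lyapunov_sublevel_feasible_barrier
    (n : ℕ) (f : EuclideanSpace ℝ (Fin n) → EuclideanSpace ℝ (Fin n))
    (hf : ∀ x, ∃ K, ∃ s ∈ nhds x, LipschitzOnWith K f s) (hf0 : f 0 = 0)
    (V : EuclideanSpace ℝ (Fin n) → ℝ) (hV : ContDiff ℝ 1 V)
    (κ : ℝ → ℝ) (hκ : StrictMono κ) (hκ0 : κ 0 = 0)
    (c : ℝ) (hc : 0 < c)
    (hdec : ∀ x, V x ≤ c → x ≠ 0 → -fderiv ℝ V x (f x) > 0)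
    -- `hstar` is an optimal barrier certificate: its region `C*` has measure at least that
    -- of the region of every feasible barrier certificate `h'`.
    (hstar : EuclideanSpace ℝ (Fin n) → ℝ)
    (hopt : ∀ h' : EuclideanSpace ℝ (Fin n) → ℝ, Differentiable ℝ h' →
      (∀ x, h' x ≥ 0 → x ≠ 0 → -fderiv ℝ V x (f x) > 0) →
      (∀ x, h' x ≥ 0 → fderiv ℝ h' x (f x) ≥ -κ (h' x)) →
      MeasureTheory.volume {x | h' x ≥ 0} ≤ MeasureTheory.volume {x | hstar x ≥ 0}) :
    (∀ x, c - V x ≥ 0 → fderiv ℝ (fun y => c - V y) x (f x) ≥ -κ (c - V x)) ∧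
    {x | c - V x ≥ 0} = {x | V x ≤ c} ∧
    MeasureTheory.volume {x | V x ≤ c} ≤ MeasureTheory.volume {x | hstar x ≥ 0} :=
  lyapunov_sublevel_feasible_barrier_general n f hf0 V hV κ hκ hκ0 c hdec hstar hopt
end
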